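/- arXiv:1907.12210 — 2 statements merged into one kernel-verified Lean document; each statement's English description precedes it below -/
import Mathlib

section
/- Let V be a finite-dimensional real inner product space with the Hilbert–Schmidt inner product on endomorphisms, let J be orthogonal with J² = -id, and let L, Q be endomorphisms of V satisfying J∘L + L∘J + 2Q = 0, with L skew-adjoint and Q self-adjoint, and Jᵀ = -J. Then |Q|² = -⟨J∘L, Q⟩, and consequently ⟨L - J∘Q, J∘Q⟩ = 0. -/
/-- The Hilbert–Schmidt (trace) inner product on endomorphisms. -/
noncomputable def hsInner {V : Type*} [NormedAddCommGroup V] [InnerProductSpace ℝ V]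
    [FiniteDimensional ℝ V] (X Y : V →ₗ[ℝ] V) : ℝ :=
  LinearMap.trace ℝ V (LinearMap.adjoint X ∘ₗ Y)

private theorem tr4 {V : Type*} [NormedAddCommGroup V] [InnerProductSpace ℝ V]
    [FiniteDimensional ℝ V] (a b c d : V →ₗ[ℝ] V) :
    LinearMap.trace ℝ V (a ∘ₗ b ∘ₗ c ∘ₗ d) = LinearMap.trace ℝ V (d ∘ₗ a ∘ₗ b ∘ₗ c) := by
  rw [show a ∘ₗ b ∘ₗ c ∘ₗ d = (a ∘ₗ b ∘ₗ c) ∘ₗ d by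
    rw [LinearMap.comp_assoc, LinearMap.comp_assoc], LinearMap.trace_comp_comm']

theorem stmt_2 {V : Type*} [NormedAddCommGroup V] [InnerProductSpace ℝ V]
    [FiniteDimensional ℝ V] (J L Q : V →ₗ[ℝ] V)
    (hJorth : LinearMap.adjoint J ∘ₗ J = LinearMap.id)
    (hJ2 : J ∘ₗ J = -LinearMap.id)
    (hJskew : LinearMap.adjoint J = -J)
    (hLskew : LinearMap.adjoint L = -L)
    (hQself : LinearMap.adjoint Q = Q)
    (hrel : J ∘ₗ L + L ∘ₗ J + 2 • Q = 0) :
    hsInner Q Q = -hsInner (J ∘ₗ L) Q ∧ hsInner (L - J ∘ₗ Q) (J ∘ₗ Q) = 0 := by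
  set T := LinearMap.trace ℝ V with hT
  have hQ2 : 2 • Q = -(J ∘ₗ L + L ∘ₗ J) := by
    have h := hrel
    rwa [add_comm, add_eq_zero_iff_eq_neg] at h
  have hkey : T (J ∘ₗ L ∘ₗ Q) = T (L ∘ₗ J ∘ₗ Q) := by
    have h1 : T (J ∘ₗ L ∘ₗ ((2:ℕ) • Q)) = T (L ∘ₗ J ∘ₗ ((2:ℕ) • Q)) := by
      rw [hQ2]
      simp only [LinearMap.comp_neg, LinearMap.comp_add, map_neg, map_add]
      have e1 : T (J ∘ₗ L ∘ₗ J ∘ₗ L) = T (L ∘ₗ J ∘ₗ L ∘ₗ J) := by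
        rw [tr4, tr4]
      have e2 : T (J ∘ₗ L ∘ₗ L ∘ₗ J) = T (L ∘ₗ J ∘ₗ J ∘ₗ L) := by
        rw [tr4 J L L J, tr4 J J L L]
      rw [e1, e2]
      ring
    rw [show (2 : ℕ) • Q = Q + Q from two_smul ℕ Q] at h1
    simp only [LinearMap.comp_add, map_add] at h1
    linarith
  have hsum : T (J ∘ₗ L ∘ₗ Q) + T (L ∘ₗ J ∘ₗ Q) + 2 * T (Q ∘ₗ Q) = 0 := by
    have h := congrArg (fun f => T (f ∘ₗ Q)) hrel
    simpa [LinearMap.add_comp, LinearMap.smul_comp, map_add, LinearMap.comp_assoc,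
      two_smul, two_mul] using h
  have hQQ : T (Q ∘ₗ Q) = -T (L ∘ₗ J ∘ₗ Q) := by linarith
  have hadjJL : LinearMap.adjoint (J ∘ₗ L) = L ∘ₗ J := by
    rw [LinearMap.adjoint_comp, hLskew, hJskew, LinearMap.neg_comp, LinearMap.comp_neg,
      neg_neg]
  constructor
  · simp only [hsInner, hQself, hadjJL, ← hT, LinearMap.comp_assoc]
    exact hQQ
  · have hadj2 : LinearMap.adjoint (L - J ∘ₗ Q) = -L + Q ∘ₗ J := by
      rw [map_sub, hLskew, LinearMap.adjoint_comp, hQself, hJskew, LinearMap.comp_neg]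
      abel
    have h3 : Q ∘ₗ J ∘ₗ J ∘ₗ Q = -(Q ∘ₗ Q) := by
      rw [show Q ∘ₗ J ∘ₗ J ∘ₗ Q = Q ∘ₗ (J ∘ₗ J) ∘ₗ Q by simp [LinearMap.comp_assoc], hJ2]
      simp
    simp only [hsInner, hadj2, ← hT, LinearMap.add_comp, LinearMap.neg_comp, map_add,
      map_neg, LinearMap.comp_assoc, h3]
    linarith [hQQ]
end

section
/- Let G_{(x₀,t₀)}(x,t) = (4π(t₀-t))^{-n/2} exp(-|x-x₀|²/(4(t₀-t))) for t < t₀. If T₀ - 4R² < t < T₀ - R², |x₀| ≤ r, |t₀ - T₀| ≤ r², δ ≤ r, and r = σR with σ ≤ 1/2 sufficiently small, then for |x| ≤ R/σ one has G_{(x₀, t₀+2δ²)}(x,t) ≤ C(n,σ)·G_{(0,T₀)}(x,t), where C(n,σ) depends only on n and σ. -/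
open Real

/-- The backward Gaussian heat kernel on `ℝⁿ` centered at `(c, s)`. -/
noncomputable def heatKer (n : ℕ) (c : EuclideanSpace ℝ (Fin n)) (s : ℝ)
    (x : EuclideanSpace ℝ (Fin n)) (t : ℝ) : ℝ :=
  (4 * π * (s - t)) ^ (-(n : ℝ) / 2) * Real.exp (-‖x - c‖ ^ 2 / (4 * (s - t)))

set_option maxHeartbeats 1000000 in
/-- Kernel comparison for the ε-regularity theorem: for `σ ≤ 1/2`
sufficiently small there is a constant `C = C(n,σ)` such that whenever
`T₀ - 4R² < t < T₀ - R²`, `|x₀| ≤ r`, `|t₀ - T₀| ≤ r²`, `0 ≤ δ ≤ r` with `r = σR`,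
and `|x| ≤ R/σ`, one has `G_{(x₀, t₀+2δ²)}(x,t) ≤ C·G_{(0,T₀)}(x,t)`. -/
theorem stmt_15 (n : ℕ) (hn : 1 ≤ n) :
    ∃ σ₀ : ℝ, 0 < σ₀ ∧ σ₀ ≤ 1 / 2 ∧
      ∀ σ : ℝ, 0 < σ → σ ≤ σ₀ →
        ∃ C : ℝ, 0 < C ∧
          ∀ (T₀ R t t₀ δ : ℝ) (x₀ x : EuclideanSpace ℝ (Fin n)),
            0 < R → T₀ - 4 * R ^ 2 < t → t < T₀ - R ^ 2 →
            ‖x₀‖ ≤ σ * R → |t₀ - T₀| ≤ (σ * R) ^ 2 → 0 ≤ δ → δ ≤ σ * R →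
            ‖x‖ ≤ R / σ →
            heatKer n x₀ (t₀ + 2 * δ ^ 2) x t ≤ C * heatKer n 0 T₀ x t := by
  refine ⟨1/10, by norm_num, by norm_num, ?_⟩
  intro σ hσ hσ'
  refine ⟨4 ^ n * Real.exp 2, by positivity, ?_⟩
  intro T₀ R t t₀ δ x₀ x hR ht1 ht2 hx₀ ht₀ hδ0 hδ hx
  simp only [heatKer, sub_zero]
  set s₁ := t₀ + 2 * δ ^ 2 - t with hs₁def
  set s₂ := T₀ - t with hs₂def
  have hπ := Real.pi_pos
  have hR2 : (0:ℝ) < R ^ 2 := by positivity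
  have hσ2 : σ ^ 2 ≤ 1/100 := by nlinarith
  have hs₂a : R ^ 2 < s₂ := by rw [hs₂def]; linarith
  have hs₂b : s₂ < 4 * R ^ 2 := by rw [hs₂def]; linarith
  have hδ2 : δ ^ 2 ≤ σ ^ 2 * R ^ 2 := by nlinarith
  have habs := abs_le.mp ht₀
  have hs₁a : s₂ - 3 * σ ^ 2 * R ^ 2 ≤ s₁ := by
    rw [hs₁def, hs₂def]; nlinarith [habs.1]
  have hs₁b : s₁ ≤ s₂ + 3 * σ ^ 2 * R ^ 2 := by
    rw [hs₁def, hs₂def]; nlinarith [habs.2]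
  have hs₁pos : 97/100 * R ^ 2 ≤ s₁ := by nlinarith
  have hs₁0 : 0 < s₁ := by nlinarith
  have hs₂0 : 0 < s₂ := lt_trans hR2 hs₂a
  -- norm inequalities
  have hxσ : ‖x‖ * σ ≤ R := (le_div_iff₀ hσ).mp hx
  have hAB : ‖x‖ * ‖x₀‖ ≤ R ^ 2 := by
    calc ‖x‖ * ‖x₀‖ ≤ ‖x‖ * (σ * R) :=
          mul_le_mul_of_nonneg_left hx₀ (norm_nonneg x)
      _ = ‖x‖ * σ * R := by ring
      _ ≤ R * R := mul_le_mul_of_nonneg_right hxσ hR.le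
      _ = R ^ 2 := by ring
  have hA2 : σ ^ 2 * ‖x‖ ^ 2 ≤ R ^ 2 := by
    have h := mul_le_mul hxσ hxσ (mul_nonneg (norm_nonneg x) hσ.le) hR.le
    nlinarith [h]
  have hDsq : (‖x‖ - ‖x₀‖) ^ 2 ≤ ‖x - x₀‖ ^ 2 := by
    apply sq_le_sq'
    · have h := norm_sub_norm_le x₀ x
      rw [norm_sub_rev] at h; linarith
    · exact norm_sub_norm_le x x₀
  have hD2 : ‖x‖ ^ 2 - 2 * (‖x‖ * ‖x₀‖) ≤ ‖x - x₀‖ ^ 2 := by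
    nlinarith [sq_nonneg ‖x₀‖]
  -- the key polynomial inequality
  have h1 : ‖x‖ ^ 2 * (s₁ - s₂) ≤ 3 * R ^ 4 := by
    rcases le_or_gt s₁ s₂ with h | h
    · have := mul_nonpos_of_nonneg_of_nonpos (sq_nonneg ‖x‖)
        (by linarith : s₁ - s₂ ≤ 0)
      nlinarith
    · have h5 : ‖x‖ ^ 2 * (s₁ - s₂) ≤ ‖x‖ ^ 2 * (3 * σ ^ 2 * R ^ 2) :=
        mul_le_mul_of_nonneg_left (by linarith) (sq_nonneg ‖x‖)
      nlinarith [mul_le_mul_of_nonneg_left hA2 (by positivity : (0:ℝ) ≤ 3 * R ^ 2)]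
  have h2 : (‖x‖ ^ 2 - 2 * (‖x‖ * ‖x₀‖)) * s₂ ≤ ‖x - x₀‖ ^ 2 * s₂ :=
    mul_le_mul_of_nonneg_right hD2 hs₂0.le
  have h3 : ‖x‖ * ‖x₀‖ * s₂ ≤ R ^ 2 * s₂ := mul_le_mul_of_nonneg_right hAB hs₂0.le
  have p1 : 97/100 * R ^ 2 * s₂ ≤ s₁ * s₂ := mul_le_mul_of_nonneg_right hs₁pos hs₂0.le
  have p2 : R ^ 2 * R ^ 2 ≤ R ^ 2 * s₂ := mul_le_mul_of_nonneg_left hs₂a.le hR2.le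
  have hkey : ‖x‖ ^ 2 * s₁ - ‖x - x₀‖ ^ 2 * s₂ ≤ 8 * (s₁ * s₂) := by nlinarith
  -- exponent comparison
  have hexp : ‖x‖ ^ 2 / (4 * s₂) - ‖x - x₀‖ ^ 2 / (4 * s₁) ≤ 2 := by
    rw [div_sub_div _ _ (by positivity : (4:ℝ) * s₂ ≠ 0)
        (by positivity : (4:ℝ) * s₁ ≠ 0),
      div_le_iff₀ (by positivity)]
    nlinarith [hkey]
  have hE : Real.exp (-‖x - x₀‖ ^ 2 / (4 * s₁)) ≤
      Real.exp 2 * Real.exp (-‖x‖ ^ 2 / (4 * s₂)) := by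
    rw [← Real.exp_add]
    apply Real.exp_le_exp.mpr
    have e1 : -‖x - x₀‖ ^ 2 / (4 * s₁) = -(‖x - x₀‖ ^ 2 / (4 * s₁)) := by ring
    have e2 : -‖x‖ ^ 2 / (4 * s₂) = -(‖x‖ ^ 2 / (4 * s₂)) := by ring
    rw [e1, e2]; linarith
  -- prefactor comparison
  have hb₁ : (0:ℝ) < 4 * π * s₁ := by positivity
  have hb₂ : (0:ℝ) < 4 * π * s₂ := by positivity
  have hs₂16 : s₂ ≤ 16 * s₁ := by linarith
  have h16n : (16:ℝ) ^ ((n:ℝ)/2) = (4:ℝ) ^ n := by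
    have h4 : (16:ℝ) = (4:ℝ) ^ (2:ℝ) := by
      rw [show (2:ℝ) = ((2:ℕ):ℝ) by norm_num, Real.rpow_natCast]; norm_num
    rw [h4, ← Real.rpow_natCast (4:ℝ) n, ← Real.rpow_mul (by norm_num)]
    congr 1; ring
  have key : (4 * π * s₂) ^ ((n:ℝ)/2) ≤ 4 ^ n * (4 * π * s₁) ^ ((n:ℝ)/2) := by
    have h16 : 4 * π * s₂ ≤ 16 * (4 * π * s₁) := by nlinarith
    calc (4 * π * s₂) ^ ((n:ℝ)/2)
        ≤ (16 * (4 * π * s₁)) ^ ((n:ℝ)/2) :=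
          Real.rpow_le_rpow hb₂.le h16 (by positivity)
      _ = (16:ℝ) ^ ((n:ℝ)/2) * (4 * π * s₁) ^ ((n:ℝ)/2) :=
          Real.mul_rpow (by norm_num) hb₁.le
      _ = 4 ^ n * (4 * π * s₁) ^ ((n:ℝ)/2) := by rw [h16n]
  have hP : (4 * π * s₁) ^ (-(n:ℝ)/2) ≤ 4 ^ n * (4 * π * s₂) ^ (-(n:ℝ)/2) := by
    have ha : (0:ℝ) < (4 * π * s₂) ^ ((n:ℝ)/2) := Real.rpow_pos_of_pos hb₂ _
    have hb : (0:ℝ) < (4 * π * s₁) ^ ((n:ℝ)/2) := Real.rpow_pos_of_pos hb₁ _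
    rw [neg_div, Real.rpow_neg hb₁.le, Real.rpow_neg hb₂.le,
      inv_eq_one_div, inv_eq_one_div, mul_one_div, div_le_div_iff₀ hb ha, one_mul]
    linarith [key]
  calc (4 * π * s₁) ^ (-(n:ℝ)/2) * Real.exp (-‖x - x₀‖ ^ 2 / (4 * s₁))
      ≤ (4 ^ n * (4 * π * s₂) ^ (-(n:ℝ)/2)) *
        (Real.exp 2 * Real.exp (-‖x‖ ^ 2 / (4 * s₂))) := by
        apply mul_le_mul hP hE (Real.exp_pos _).le
        have : (0:ℝ) ≤ (4 * π * s₂) ^ (-(n:ℝ)/2) := Real.rpow_nonneg hb₂.le _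
        positivity
    _ = 4 ^ n * Real.exp 2 *
        ((4 * π * s₂) ^ (-(n:ℝ)/2) * Real.exp (-‖x‖ ^ 2 / (4 * s₂))) := by ring
end
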